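/- Let F(X) = f(λ(X)) be a Schur-convex spectral function on n×n real symmetric matrices, let A, B be symmetric, and let X̄ be a symmetric matrix with λ(X̄) = λ(B) such that −A and X̄ strongly commute. Then X̄ is a global maximizer of F(X − A) over {X symmetric : λ(X) = λ(B)}. -/

import Mathlib

open Finset

/-- Decreasing rearrangement of a vector in ℝⁿ. -/
noncomputable def dsort {n : ℕ} (u : Fin n → ℝ) : Fin n → ℝ :=
  u ∘ Tuple.sort (fun i => -u i)

/-- `Maj u v` : `u` is majorized by `v`. -/
def Maj {n : ℕ} (u v : Fin n → ℝ) : Prop :=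
  (∀ k : ℕ, ∑ i ∈ univ.filter (fun i : Fin n => (i : ℕ) < k), dsort u i ≤
      ∑ i ∈ univ.filter (fun i : Fin n => (i : ℕ) < k), dsort v i) ∧
  ∑ i, u i = ∑ i, v i

open Matrix

/-- Decreasingly ordered eigenvalue vector of a real symmetric matrix. -/
noncomputable def specVec {n : ℕ} {A : Matrix (Fin n) (Fin n) ℝ} (hA : A.IsHermitian) :
    Fin n → ℝ :=
  dsort hA.eigenvalues

/-- `A` and `B` strongly commute: a common orthonormal eigenbasis realizing both
decreasingly ordered spectra simultaneously. -/
def StrongCommute {n : ℕ} {A B : Matrix (Fin n) (Fin n) ℝ}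
    (hA : A.IsHermitian) (hB : B.IsHermitian) : Prop :=
  ∃ U : Matrix (Fin n) (Fin n) ℝ, U * Uᵀ = 1 ∧
    Uᵀ * A * U = Matrix.diagonal (specVec hA) ∧
    Uᵀ * B * U = Matrix.diagonal (specVec hB)

/-
Ky Fan's inequality gives `λ(X - A) ≺ λ(X) + λ(-A)` for every symmetric `X`; when `λ(X) = λ(B)`
the right-hand side is `λ(X̄) + λ(-A)`, which equals `λ(X̄ - A)` because `X̄` and `-A` are
diagonalized by one orthogonal matrix with both spectra in decreasing order. Schur-convexity of `f`
then gives `f(λ(X - A)) ≤ f(λ(X̄ - A))`. Ky Fan's inequality itself reduces, after an orthogonal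
change of basis, to a bathtub estimate for weights in `[0, 1]` with prescribed sum.
-/

section Rearrangement

variable {n : ℕ}

lemma antitone_dsort (u : Fin n → ℝ) : Antitone (dsort u) := by
  intro i j hij
  simpa [dsort] using Tuple.monotone_sort (fun i => -u i) hij

lemma map_univ_val_dsort (u : Fin n → ℝ) : univ.val.map (dsort u) = univ.val.map u := by
  rw [dsort, ← Multiset.map_map, Multiset.map_univ_val_equiv]

lemma dsort_eq_of_map_univ_val_eq {u w : Fin n → ℝ} (hw : Antitone w)
    (h : univ.val.map u = univ.val.map w) : dsort u = w := by
  have hperm : (List.ofFn (dsort u)).Perm (List.ofFn w) := by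
    rw [← Multiset.coe_eq_coe, ← Fin.univ_val_map, ← Fin.univ_val_map, map_univ_val_dsort, h]
  exact List.ofFn_injective <| hperm.eq_of_sortedGE
    (List.sortedGE_ofFn_iff.mpr (antitone_dsort u)) (List.sortedGE_ofFn_iff.mpr hw)

lemma dsort_eq_self_of_antitone {u : Fin n → ℝ} (hu : Antitone u) : dsort u = u :=
  dsort_eq_of_map_univ_val_eq hu rfl

lemma sum_dsort (u : Fin n → ℝ) : ∑ i, dsort u i = ∑ i, u i :=
  Equiv.sum_comp _ u

end Rearrangement

section Bathtub

lemma sum_mul_le_sum_of_threshold {ι : Type*} [Fintype ι] {μ c : ι → ℝ} {S : Finset ι} {t : ℝ}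
    (hS : ∀ i ∈ S, t ≤ μ i) (hSc : ∀ i ∉ S, μ i ≤ t) (h0 : ∀ i, 0 ≤ c i) (h1 : ∀ i, c i ≤ 1)
    (hc : ∑ i, c i = #S) :
    ∑ i, μ i * c i ≤ ∑ i ∈ S, μ i := by
  classical
  -- `∑ μ c - ∑_S μ = ∑ (μ - t) (c - 1_S)`, since `∑ c = #S`; every summand is `≤ 0`.
  have hterm : ∀ i, (μ i - t) * (c i - if i ∈ S then 1 else 0) ≤ 0 := by
    intro i
    split_ifs with hi
    · exact mul_nonpos_of_nonneg_of_nonpos (sub_nonneg.2 (hS i hi)) (sub_nonpos.2 (h1 i))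
    · exact mul_nonpos_of_nonpos_of_nonneg (sub_nonpos.2 (hSc i hi)) (by simpa using h0 i)
  have hexpand : ∑ i, (μ i - t) * (c i - if i ∈ S then 1 else 0)
      = ∑ i, μ i * c i - ∑ i ∈ S, μ i - t * (∑ i, c i - #S) := by
    simp only [mul_sub, sub_mul, mul_ite, mul_one, mul_zero, sum_sub_distrib, sum_ite_mem,
      univ_inter, sum_const, nsmul_eq_mul, mul_sum]
    ring
  rw [hc, sub_self, mul_zero, sub_zero] at hexpand
  linarith [Finset.sum_nonpos fun i (_ : i ∈ univ) => hterm i]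

lemma sum_mul_le_sum_of_antitone {n : ℕ} {μ c : Fin n → ℝ} (hμ : Antitone μ)
    (h0 : ∀ i, 0 ≤ c i) (h1 : ∀ i, c i ≤ 1) {k : ℕ} (hc : ∑ i, c i = #{i : Fin n | (i : ℕ) < k}) :
    ∑ i, μ i * c i ≤ ∑ i ∈ {i : Fin n | (i : ℕ) < k}, μ i := by
  by_cases hk : k < n
  · refine sum_mul_le_sum_of_threshold (t := μ ⟨k, hk⟩) (fun i hi => hμ ?_) (fun i hi => hμ ?_)
      h0 h1 hc
    · simp only [mem_filter, mem_univ, true_and] at hi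
      exact Fin.mk_le_of_le_val hi.le
    · simp only [mem_filter, mem_univ, true_and, not_lt] at hi
      exact Fin.le_def.2 hi
  · refine sum_mul_le_sum_of_threshold (t := ⨅ i, μ i)
      (fun i _ => ciInf_le (Finite.bddBelow_range μ) i) (fun i hi => absurd ?_ hi) h0 h1 hc
    simp only [mem_filter, mem_univ, true_and]
    omega

end Bathtub

section Orthogonal

variable {m : Type*} [Fintype m] [DecidableEq m]

lemma sum_sq_row_eq_one {R : Matrix m m ℝ} (hR : R * Rᵀ = 1) (j : m) : ∑ i, R j i ^ 2 = 1 := by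
  simpa [mul_apply, sq] using congrFun (congrFun hR j) j

lemma sum_sq_col_eq_one {R : Matrix m m ℝ} (hR : R * Rᵀ = 1) (i : m) : ∑ j, R j i ^ 2 = 1 :=
  sum_sq_row_eq_one (R := Rᵀ) (by rw [transpose_transpose]; exact mul_eq_one_comm.mp hR) i

lemma mul_diagonal_mul_transpose_apply_self (R : Matrix m m ℝ) (μ : m → ℝ) (j : m) :
    (R * diagonal μ * Rᵀ) j j = ∑ i, μ i * R j i ^ 2 := by
  simp only [mul_apply, diagonal_apply, mul_ite, mul_zero, sum_ite_eq', mem_univ, if_true,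
    transpose_apply]
  exact sum_congr rfl fun i _ => by ring

end Orthogonal

section Spectrum

variable {n : ℕ}

lemma exists_conj_eq_diagonal_specVec {M : Matrix (Fin n) (Fin n) ℝ} (hM : M.IsHermitian) :
    ∃ Q : Matrix (Fin n) (Fin n) ℝ, Q * Qᵀ = 1 ∧ Qᵀ * M * Q = diagonal (specVec hM) := by
  set V : Matrix (Fin n) (Fin n) ℝ := (hM.eigenvectorUnitary : Matrix (Fin n) (Fin n) ℝ)
  have hV : Vᵀ * M * V = diagonal hM.eigenvalues := by
    simpa [V, Unitary.conjStarAlgAut_star_apply, star_eq_conjTranspose, Matrix.mul_assoc]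
      using hM.conjStarAlgAut_star_eigenvectorUnitary
  have hVV : V * Vᵀ = 1 := by
    simpa [star_eq_conjTranspose] using (mem_unitaryGroup_iff.mp hM.eigenvectorUnitary.2)
  set σ := Tuple.sort fun i => -hM.eigenvalues i
  refine ⟨V.submatrix id σ, ?_, ?_⟩
  · rw [transpose_submatrix, ← submatrix_mul _ _ _ _ _ σ.bijective, hVV, submatrix_id_id]
  · calc (V.submatrix id σ)ᵀ * M * V.submatrix id σ = (Vᵀ * M * V).submatrix σ σ := by
          rw [submatrix_mul _ _ _ id _ Function.bijective_id,
            submatrix_mul _ _ _ id _ Function.bijective_id, submatrix_id_id, transpose_submatrix]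
      _ = diagonal (specVec hM) := by rw [hV, submatrix_diagonal_equiv]; rfl

lemma antitone_specVec {M : Matrix (Fin n) (Fin n) ℝ} (hM : M.IsHermitian) :
    Antitone (specVec hM) :=
  antitone_dsort _

lemma sum_specVec {M : Matrix (Fin n) (Fin n) ℝ} (hM : M.IsHermitian) :
    ∑ i, specVec hM i = M.trace := by
  simp [specVec, sum_dsort, hM.trace_eq_sum_eigenvalues]

lemma specVec_eq_of_conj_eq_diagonal {M U : Matrix (Fin n) (Fin n) ℝ} (hM : M.IsHermitian)
    {w : Fin n → ℝ} (hU : U * Uᵀ = 1) (h : Uᵀ * M * U = diagonal w) (hw : Antitone w) :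
    specVec hM = w := by
  have hM_eq : M = U * diagonal w * Uᵀ := by
    rw [← h, ← Matrix.mul_assoc, ← Matrix.mul_assoc, hU, Matrix.one_mul, Matrix.mul_assoc, hU,
      Matrix.mul_one]
  have hcharpoly : M.charpoly = (diagonal w).charpoly := by
    rw [hM_eq, charpoly_mul_comm, ← Matrix.mul_assoc, mul_eq_one_comm.mp hU, Matrix.one_mul]
  refine dsort_eq_of_map_univ_val_eq hw ?_
  have := hM.roots_charpoly_eq_eigenvalues
  rw [hcharpoly, charpoly_diagonal, Polynomial.roots_prod _ _
    (prod_ne_zero_iff.mpr fun i _ => Polynomial.X_sub_C_ne_zero (w i))] at this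
  simpa using this.symm

theorem sum_diag_conj_le_sum_specVec {M Q : Matrix (Fin n) (Fin n) ℝ} (hM : M.IsHermitian)
    (hQ : Q * Qᵀ = 1) (k : ℕ) :
    ∑ j ∈ {j : Fin n | (j : ℕ) < k}, (Qᵀ * M * Q) j j ≤
      ∑ i ∈ {i : Fin n | (i : ℕ) < k}, specVec hM i := by
  obtain ⟨P, hP, hPM⟩ := exists_conj_eq_diagonal_specVec hM
  set S : Finset (Fin n) := {j | (j : ℕ) < k}
  set R := Qᵀ * P
  have hR : R * Rᵀ = 1 := by
    rw [transpose_mul, transpose_transpose, Matrix.mul_assoc, ← Matrix.mul_assoc P, hP,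
      Matrix.one_mul, mul_eq_one_comm.mp hQ]
  have hconj : Qᵀ * M * Q = R * diagonal (specVec hM) * Rᵀ := by
    simp only [R, ← hPM, transpose_mul, transpose_transpose, Matrix.mul_assoc]
    simp only [← Matrix.mul_assoc P, hP, Matrix.one_mul]
  -- The weights `∑_{j ∈ S} R j i ^ 2` lie in `[0, 1]` and add up to `#S`, as `R` is orthogonal.
  calc ∑ j ∈ S, (Qᵀ * M * Q) j j = ∑ i, specVec hM i * ∑ j ∈ S, R j i ^ 2 := by
        simp_rw [hconj, mul_diagonal_mul_transpose_apply_self, mul_sum]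
        exact sum_comm
    _ ≤ ∑ i ∈ S, specVec hM i := by
      refine sum_mul_le_sum_of_antitone (antitone_specVec hM)
        (fun i => sum_nonneg fun j _ => sq_nonneg _) (fun i => ?_) ?_
      · rw [← sum_sq_col_eq_one hR i]
        exact sum_le_sum_of_subset_of_nonneg (subset_univ S) fun j _ _ => sq_nonneg _
      · rw [sum_comm, sum_congr rfl fun j _ => sum_sq_row_eq_one hR j]
        simp [S]

end Spectrum

section KyFan

variable {n : ℕ}

lemma specVec_congr {M N : Matrix (Fin n) (Fin n) ℝ} (hM : M.IsHermitian) (hN : N.IsHermitian)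
    (h : M = N) : specVec hM = specVec hN := by
  subst h; rfl

theorem maj_specVec_add {X Y : Matrix (Fin n) (Fin n) ℝ} (hX : X.IsHermitian)
    (hY : Y.IsHermitian) (hXY : (X + Y).IsHermitian) :
    Maj (specVec hXY) (specVec hX + specVec hY) := by
  refine ⟨fun k => ?_, ?_⟩
  · rw [dsort_eq_self_of_antitone (antitone_specVec hXY),
      dsort_eq_self_of_antitone (u := specVec hX + specVec hY)
        ((antitone_specVec hX).add (antitone_specVec hY))]
    obtain ⟨Q, hQ, hQXY⟩ := exists_conj_eq_diagonal_specVec hXY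
    calc ∑ i ∈ {i : Fin n | (i : ℕ) < k}, specVec hXY i
        = ∑ j ∈ {j : Fin n | (j : ℕ) < k}, ((Qᵀ * X * Q) j j + (Qᵀ * Y * Q) j j) := by
          refine sum_congr rfl fun j _ => ?_
          rw [← Matrix.add_apply, ← Matrix.add_mul, ← Matrix.mul_add, hQXY, diagonal_apply_eq]
      _ ≤ ∑ i ∈ {i : Fin n | (i : ℕ) < k}, (specVec hX + specVec hY) i := by
          simp only [Pi.add_apply, sum_add_distrib]
          exact add_le_add (sum_diag_conj_le_sum_specVec hX hQ k)
            (sum_diag_conj_le_sum_specVec hY hQ k)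
  · simp only [sum_specVec, Pi.add_apply, sum_add_distrib, trace_add]

theorem specVec_add_of_strongCommute {X Y : Matrix (Fin n) (Fin n) ℝ} {hX : X.IsHermitian}
    {hY : Y.IsHermitian} (h : StrongCommute hX hY) (hXY : (X + Y).IsHermitian) :
    specVec hXY = specVec hX + specVec hY := by
  obtain ⟨U, hU, hUX, hUY⟩ := h
  refine specVec_eq_of_conj_eq_diagonal hXY hU ?_
    ((antitone_specVec hX).add (antitone_specVec hY))
  rw [Matrix.mul_add, Matrix.add_mul, hUX, hUY, diagonal_add]
  rfl

end KyFan

theorem stmt13_general {n : ℕ} {A B Xbar : Matrix (Fin n) (Fin n) ℝ}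
    (hA : A.IsHermitian) (hB : B.IsHermitian) (hXbar : Xbar.IsHermitian)
    (f : (Fin n → ℝ) → ℝ)
    (hschur : ∀ u v : Fin n → ℝ, Maj u v → f u ≤ f v)
    (hspec : specVec hXbar = specVec hB)
    (hcomm : StrongCommute hA.neg hXbar) :
    ∀ (X : Matrix (Fin n) (Fin n) ℝ) (hX : X.IsHermitian), specVec hX = specVec hB →
      f (specVec (hX.sub hA)) ≤ f (specVec (hXbar.sub hA)) := by
  intro X hX hXB
  rw [specVec_congr (hX.sub hA) (hX.add hA.neg) (sub_eq_add_neg X A),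
    specVec_congr (hXbar.sub hA) (hA.neg.add hXbar) (sub_eq_neg_add Xbar A),
    specVec_add_of_strongCommute hcomm, add_comm (specVec hA.neg), hspec, ← hXB]
  exact hschur _ _ (maj_specVec_add hX hA.neg _)

theorem stmt13 {n : ℕ} {A B Xbar : Matrix (Fin n) (Fin n) ℝ}
    (hA : A.IsHermitian) (hB : B.IsHermitian) (hXbar : Xbar.IsHermitian)
    (f : (Fin n → ℝ) → ℝ)
    (hsymm : ∀ (σ : Equiv.Perm (Fin n)) (u : Fin n → ℝ), f (u ∘ σ) = f u)
    (hschur : ∀ u v : Fin n → ℝ, Maj u v → f u ≤ f v)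
    (hspec : specVec hXbar = specVec hB)
    (hcomm : StrongCommute hA.neg hXbar) :
    ∀ (X : Matrix (Fin n) (Fin n) ℝ) (hX : X.IsHermitian), specVec hX = specVec hB →
      f (specVec (hX.sub hA)) ≤ f (specVec (hXbar.sub hA)) :=
  stmt13_general hA hB hXbar f hschur hspec hcomm
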